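/- Let (M,d) be a compact metric space and f : M → M a continuous map. Fix ε > 0 and δ ∈ (0,1). Then the function ν ↦ liminf_{n→∞} (1/n) log N^ν(n,ε,δ), defined on the space of Borel probability measures on M equipped with the weak* topology, is Borel measurable. -/
import Mathlib


open MeasureTheory Filter Topology

/-- The Bowen ball `B_n(x, ε) = {y : d(f^i x, f^i y) < ε for all 0 ≤ i ≤ n-1}`. -/
def bowenBall {M : Type*} [PseudoMetricSpace M] (f : M → M) (n : ℕ) (ε : ℝ) (x : M) : Set M :=
  {y | ∀ i < n, dist (f^[i] x) (f^[i] y) < ε}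

/-- `N^ν(n, ε, δ)`: the minimal cardinality of a finite set `S ⊆ M` such that the union of
the Bowen balls `B_n(x, ε)`, `x ∈ S`, has `ν`-measure greater than `1 - δ`. -/
noncomputable def spanNum {M : Type*} [PseudoMetricSpace M] [MeasurableSpace M]
    (f : M → M) (n : ℕ) (ε δ : ℝ) (ν : Measure M) : ℕ :=
  sInf {k : ℕ | ∃ S : Finset M, S.card = k ∧
    ν (⋃ x ∈ S, bowenBall f n ε x) > ENNReal.ofReal (1 - δ)}

section aux

variable {M : Type*} [MetricSpace M] [CompactSpace M] [MeasurableSpace M] [BorelSpace M]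

lemma isOpen_bowenBall (f : M → M) (hf : Continuous f) (n : ℕ) (ε : ℝ) (x : M) :
    IsOpen (bowenBall f n ε x) := by
  have h : bowenBall f n ε x = ⋂ i ∈ Finset.range n, (f^[i]) ⁻¹' Metric.ball (f^[i] x) ε := by
    ext y
    simp [bowenBall, dist_comm, Metric.mem_ball]
  rw [h]
  exact isOpen_biInter_finset fun i _ =>
    (Metric.isOpen_ball).preimage (hf.iterate i)

lemma self_mem_bowenBall (f : M → M) (n : ℕ) {ε : ℝ} (hε : 0 < ε) (x : M) :
    x ∈ bowenBall f n ε x := fun i _ => by simp [hε]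

/-- The set `{ν | c < ν U}` is open in the weak* topology, for `U` open. -/
lemma isOpen_measure_gt {U : Set M} (hU : IsOpen U) (c : ENNReal) :
    IsOpen {ν : ProbabilityMeasure M | c < (ν : Measure M) U} := by
  rw [← isClosed_compl_iff]
  have hset : {ν : ProbabilityMeasure M | c < (ν : Measure M) U}ᶜ
      = {ν : ProbabilityMeasure M | (ν : Measure M) U ≤ c} := by
    ext ν; simp [not_lt]
  rw [hset]
  rw [isClosed_iff_clusterPt]
  intro ν hν
  have hL : (𝓝 ν ⊓ 𝓟 {ρ : ProbabilityMeasure M | (ρ : Measure M) U ≤ c}).NeBot := hν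
  have htend : Tendsto (id : ProbabilityMeasure M → ProbabilityMeasure M)
      (𝓝 ν ⊓ 𝓟 {ρ : ProbabilityMeasure M | (ρ : Measure M) U ≤ c}) (𝓝 ν) :=
    tendsto_id.mono_left inf_le_left
  have h1 := ProbabilityMeasure.le_liminf_measure_open_of_tendsto htend hU
  refine le_trans h1 ?_
  apply liminf_le_of_frequently_le'
  apply Eventually.frequently
  exact eventually_inf_principal.mpr (Eventually.of_forall fun ρ hρ => hρ)

/-- The helper set in `spanNum` is nonempty, by compactness. -/
lemma spanSet_nonempty (f : M → M) (hf : Continuous f) (n : ℕ) {ε δ : ℝ}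
    (hε : 0 < ε) (hδ : 0 < δ) (ν : ProbabilityMeasure M) :
    {k : ℕ | ∃ S : Finset M, S.card = k ∧
      (ν : Measure M) (⋃ x ∈ S, bowenBall f n ε x) > ENNReal.ofReal (1 - δ)}.Nonempty := by
  obtain ⟨t, ht⟩ := IsCompact.elim_finite_subcover (isCompact_univ (X := M))
    (fun x : M => bowenBall f n ε x) (fun x => isOpen_bowenBall f hf n ε x)
    (fun x _ => Set.mem_iUnion.mpr ⟨x, self_mem_bowenBall f n hε x⟩)
  refine ⟨t.card, t, rfl, ?_⟩
  have h1 : (ν : Measure M) (⋃ x ∈ t, bowenBall f n ε x) = 1 := by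
    have := measure_mono (μ := (ν : Measure M)) ht
    simp only [measure_univ] at this
    exact le_antisymm (le_trans (measure_mono (Set.subset_univ _)) (by simp)) this
  rw [h1]
  exact lt_of_lt_of_le (ENNReal.ofReal_lt_one.mpr (by linarith)) le_rfl

/-- Measurability of `spanNum` in `ν`, w.r.t. the Borel σ-algebra of the weak* topology. -/
lemma measurable_spanNum (f : M → M) (hf : Continuous f) (n : ℕ) {ε δ : ℝ}
    (hε : 0 < ε) (hδ : 0 < δ) :
    @Measurable (ProbabilityMeasure M) ℕ (borel (ProbabilityMeasure M)) _
      (fun ν : ProbabilityMeasure M => spanNum f n ε δ (ν : Measure M)) := by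
  letI : MeasurableSpace (ProbabilityMeasure M) := borel (ProbabilityMeasure M)
  haveI : BorelSpace (ProbabilityMeasure M) := ⟨rfl⟩
  have key : ∀ k : ℕ, IsOpen {ν : ProbabilityMeasure M | spanNum f n ε δ (ν : Measure M) ≤ k} := by
    intro k
    have heq : {ν : ProbabilityMeasure M | spanNum f n ε δ (ν : Measure M) ≤ k}
        = ⋃ (S : Finset M) (_ : S.card ≤ k),
            {ν : ProbabilityMeasure M |
              ENNReal.ofReal (1 - δ) < (ν : Measure M) (⋃ x ∈ S, bowenBall f n ε x)} := by
      ext ν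
      simp only [Set.mem_setOf_eq, Set.mem_iUnion]
      constructor
      · intro hle
        have hmem := Nat.sInf_mem (spanSet_nonempty f hf n hε hδ ν)
        obtain ⟨S, hScard, hSmeas⟩ := hmem
        exact ⟨S, by rw [hScard]; exact hle, hSmeas⟩
      · rintro ⟨S, hScard, hSmeas⟩
        calc spanNum f n ε δ (ν : Measure M) ≤ S.card := Nat.sInf_le ⟨S, rfl, hSmeas⟩
          _ ≤ k := hScard
    rw [heq]
    exact isOpen_iUnion fun S => isOpen_iUnion fun _ =>
      isOpen_measure_gt (isOpen_biUnion fun x _ => isOpen_bowenBall f hf n ε x) _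
  apply measurable_to_countable'
  intro k
  have hk : (fun ν : ProbabilityMeasure M => spanNum f n ε δ (ν : Measure M)) ⁻¹' {k}
      = {ν : ProbabilityMeasure M | spanNum f n ε δ (ν : Measure M) ≤ k} \
        ⋃ (j : ℕ) (_ : j < k), {ν : ProbabilityMeasure M | spanNum f n ε δ (ν : Measure M) ≤ j} := by
    ext ν
    simp only [Set.mem_preimage, Set.mem_singleton_iff, Set.mem_diff, Set.mem_setOf_eq,
      Set.mem_iUnion, not_exists]
    constructor
    · rintro rfl
      exact ⟨le_rfl, fun j hj hle => absurd (le_trans hle hj.le) (by omega)⟩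
    · rintro ⟨h1, h2⟩
      by_contra hne
      have hlt : spanNum f n ε δ (ν : Measure M) < k := lt_of_le_of_ne h1 hne
      exact h2 _ hlt le_rfl
  rw [hk]
  exact ((key k).measurableSet).diff
    (MeasurableSet.iUnion fun j => MeasurableSet.iUnion fun _ => (key j).measurableSet)

end aux

/-- on a compact metric space with `f : M → M` continuous, for fixed `ε > 0` and
`δ ∈ (0,1)`, the Katok-type entropy `ν ↦ liminf_{n → ∞} (1/n) log N^ν(n, ε, δ)` is Borel
measurable on the space of Borel probability measures equipped with the weak* topology
(i.e. measurable with respect to the Borel σ-algebra of that topology). -/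
theorem katokEntropy_measurable
    {M : Type*} [MetricSpace M] [CompactSpace M] [MeasurableSpace M] [BorelSpace M]
    (f : M → M) (hf : Continuous f) (ε : ℝ) (hε : 0 < ε)
    (δ : ℝ) (hδ : δ ∈ Set.Ioo (0 : ℝ) 1) :
    @Measurable (ProbabilityMeasure M) ℝ (borel (ProbabilityMeasure M)) _
      (fun ν : ProbabilityMeasure M =>
        liminf (fun n : ℕ => Real.log (spanNum f n ε δ (ν : Measure M)) / n) atTop) := by
  letI : MeasurableSpace (ProbabilityMeasure M) := borel (ProbabilityMeasure M)
  haveI : BorelSpace (ProbabilityMeasure M) := ⟨rfl⟩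
  apply Measurable.liminf
  intro n
  exact (measurable_from_top (f := fun k : ℕ => Real.log k / n)).comp
    (measurable_spanNum f hf n hε hδ.1)
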